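/- If (A,L_A) and (B,L_B) are compact quantum metric spaces with dist_q(A,B) = 0, then there is an isometry between them; concretely, there exists an affine bijection α from S(B) onto S(A) that is isometric for the metrics ρ_{L_B} and ρ_{L_A}. -/

import Mathlib

/-!
If `dist_q(A, B) = 0`, there are admissible Lip-norms `L_n` on `A ⊕ B` for which every state
`ν` of `B` is `1/n`-close to some state `w_n ν` of `A`, and vice versa. Because `L_n` induces
`L_A` and `L_B`, both state spaces sit isometrically in `S(A ⊕ B)`, so `w_n` distorts distances
by at most `2/n`. As `S(A)` is weak-* compact and `ρ_{L_A}` metrizes the weak-* topology,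
`α ν := lim_U w_n ν` exists along a free ultrafilter `U`. It is isometric in the limit, affine
because `ρ` is jointly quasi-convex, and onto because the maps `S(A) → S(B)` built the same way
are right inverses.
-/

open scoped ENNReal

/-- An order-unit space in the sense of Kadison: a partially ordered real vector
space with a positive order unit `e` satisfying the order-unit property and the
Archimedean property. -/
structure OrderUnitSpace : Type 1 where
  carrier : Type
  [toAddCommGroup : AddCommGroup carrier]
  [toModule : Module ℝ carrier]
  [toPartialOrder : PartialOrder carrier]
  add_le_add_left' : ∀ a b : carrier, a ≤ b → ∀ c : carrier, c + a ≤ c + b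
  smul_nonneg' : ∀ (r : ℝ) (a : carrier), 0 ≤ r → 0 ≤ a → 0 ≤ r • a
  e : carrier
  e_nonneg : 0 ≤ e
  orderUnit : ∀ a : carrier, ∃ r : ℝ, a ≤ r • e
  arch : ∀ a : carrier, (∀ r : ℝ, 0 < r → a ≤ r • e) → a ≤ 0

attribute [instance] OrderUnitSpace.toAddCommGroup OrderUnitSpace.toModule
  OrderUnitSpace.toPartialOrder

/-- The topology generated by the open balls of a distance function. -/
def ballTopology {S : Type*} (ρ : S → S → ℝ≥0∞) : TopologicalSpace S :=
  TopologicalSpace.generateFrom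
    {U : Set S | ∃ (μ : S) (ε : ℝ≥0∞), 0 < ε ∧ U = {ν | ρ μ ν < ε}}

/-- The quotient seminorm of `L` along the surjection `π`. -/
noncomputable def quotientSeminorm {α β : Type*} (π : α → β) (L : α → ℝ) (b : β) : ℝ :=
  sInf {r : ℝ | ∃ a, π a = b ∧ L a = r}

/-- `L` induces `LB` via `π`, i.e. `LB` is the quotient seminorm of `L` for `π`. -/
def Induces {α β : Type*} (π : α → β) (L : α → ℝ) (LB : β → ℝ) : Prop :=
  ∀ b, LB b = quotientSeminorm π L b

/-- Hausdorff distance between two subsets with respect to a distance function. -/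
noncomputable def hausdorffDistWith {S : Type*} (ρ : S → S → ℝ≥0∞) (T U : Set S) : ℝ≥0∞ :=
  max (⨆ t ∈ T, ⨅ u ∈ U, ρ t u) (⨆ u ∈ U, ⨅ t ∈ T, ρ t u)

namespace OrderUnitSpace

variable (A B : OrderUnitSpace)

theorem le_of_sub_nonneg'' {x y : A.carrier} (h : 0 ≤ y - x) : x ≤ y := by
  have h2 := A.add_le_add_left' 0 (y - x) h x
  have h3 : x + (y - x) = y := by abel
  rw [add_zero, h3] at h2
  exact h2

theorem smul_e_mono {r s : ℝ} (h : r ≤ s) : r • A.e ≤ s • A.e := by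
  apply A.le_of_sub_nonneg''
  have h3 : s • A.e - r • A.e = (s - r) • A.e := by rw [sub_smul]
  rw [h3]
  exact A.smul_nonneg' _ _ (by linarith) A.e_nonneg

/-- The order-unit norm. -/
noncomputable def onorm (a : A.carrier) : ℝ :=
  sInf {r : ℝ | -(r • A.e) ≤ a ∧ a ≤ r • A.e}

/-- A state: a unital positive linear functional. -/
def IsState (μ : A.carrier →ₗ[ℝ] ℝ) : Prop :=
  μ A.e = 1 ∧ ∀ a : A.carrier, 0 ≤ a → 0 ≤ μ a

/-- The state space. -/
def State : Type := {μ : A.carrier →ₗ[ℝ] ℝ // A.IsState μ}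

/-- The weak-* topology on the state space. -/
instance : TopologicalSpace A.State :=
  TopologicalSpace.induced (fun μ : A.State => (μ.1 : A.carrier → ℝ)) Pi.topologicalSpace

/-- The metric `ρ_L` on the state space defined by a seminorm `L`. -/
noncomputable def rho (L : Seminorm ℝ A.carrier) (μ ν : A.State) : ℝ≥0∞ :=
  ⨆ a : {a : A.carrier // L a ≤ 1}, ENNReal.ofReal |μ.1 a.1 - ν.1 a.1|

/-- A Lipschitz seminorm: its null space is exactly `ℝ e`. -/
def IsLipschitz (L : Seminorm ℝ A.carrier) : Prop :=
  ∀ a : A.carrier, L a = 0 ↔ ∃ t : ℝ, a = t • A.e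

/-- A Lip-norm: a Lipschitz seminorm whose metric `ρ_L` induces the weak-* topology. -/
def IsLipNorm (L : Seminorm ℝ A.carrier) : Prop :=
  A.IsLipschitz L ∧ ballTopology (A.rho L) = (inferInstance : TopologicalSpace A.State)

/-- The diameter of the state space for `ρ_L`. -/
noncomputable def diam (L : Seminorm ℝ A.carrier) : ℝ≥0∞ :=
  ⨆ (μ : A.State) (ν : A.State), A.rho L μ ν

/-- The radius: half the diameter. -/
noncomputable def radius (L : Seminorm ℝ A.carrier) : ℝ≥0∞ := A.diam L / 2

/-- Morphism of order-unit spaces: a unital positive linear map. -/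
def IsMorphism (f : A.carrier →ₗ[ℝ] B.carrier) : Prop :=
  f A.e = B.e ∧ ∀ a : A.carrier, 0 ≤ a → 0 ≤ f a

/-- Pull back a state along a morphism; this is `S(π)`. -/
noncomputable def pullState (f : A.carrier →ₗ[ℝ] B.carrier) (hf : A.IsMorphism B f)
    (μ : B.State) : A.State :=
  ⟨(μ.1).comp f, by
    constructor
    · rw [LinearMap.comp_apply, hf.1]; exact μ.2.1
    · intro a ha; exact μ.2.2 _ (hf.2 a ha)⟩

/-- The direct sum `A ⊕ B` as an order-unit space. -/
@[reducible] def prod : OrderUnitSpace where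
  carrier := A.carrier × B.carrier
  add_le_add_left' := by
    intro a b hab c
    rw [Prod.le_def] at hab ⊢
    exact ⟨A.add_le_add_left' _ _ hab.1 _, B.add_le_add_left' _ _ hab.2 _⟩
  smul_nonneg' := by
    intro r a hr ha
    rw [Prod.le_def] at ha ⊢
    exact ⟨A.smul_nonneg' r a.1 hr ha.1, B.smul_nonneg' r a.2 hr ha.2⟩
  e := (A.e, B.e)
  e_nonneg := by
    rw [Prod.le_def]
    exact ⟨A.e_nonneg, B.e_nonneg⟩
  orderUnit := by
    intro a
    obtain ⟨r₁, h1⟩ := A.orderUnit a.1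
    obtain ⟨r₂, h2⟩ := B.orderUnit a.2
    refine ⟨max r₁ r₂, ?_⟩
    rw [Prod.le_def]
    exact ⟨le_trans h1 (A.smul_e_mono (le_max_left _ _)),
      le_trans h2 (B.smul_e_mono (le_max_right _ _))⟩
  arch := by
    intro a h
    rw [Prod.le_def]
    exact ⟨A.arch a.1 fun r hr => ((Prod.le_def.mp (h r hr)).1),
      B.arch a.2 fun r hr => ((Prod.le_def.mp (h r hr)).2)⟩

/-- The embedding of `S(A)` into `S(A ⊕ B)` dual to the first coordinate projection. -/
noncomputable def leftState (μ : A.State) : (A.prod B).State :=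
  ⟨(μ.1).comp (LinearMap.fst ℝ A.carrier B.carrier), by
    constructor
    · exact μ.2.1
    · intro p hp; exact μ.2.2 p.1 hp.1⟩

/-- The embedding of `S(B)` into `S(A ⊕ B)` dual to the second coordinate projection. -/
noncomputable def rightState (ν : B.State) : (A.prod B).State :=
  ⟨(ν.1).comp (LinearMap.snd ℝ A.carrier B.carrier), by
    constructor
    · exact ν.2.1
    · intro p hp; exact ν.2.2 p.2 hp.2⟩

/-- The set `M(L_A, L_B)` of Lip-norms on `A ⊕ B` inducing `L_A` and `L_B`
via the coordinate projections. -/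
def admissible (LA : Seminorm ℝ A.carrier) (LB : Seminorm ℝ B.carrier) :
    Set (Seminorm ℝ (A.prod B).carrier) :=
  {L | (A.prod B).IsLipNorm L ∧
    Induces (Prod.fst : A.carrier × B.carrier → A.carrier) (fun p => L p) (fun a => LA a) ∧
    Induces (Prod.snd : A.carrier × B.carrier → B.carrier) (fun p => L p) (fun b => LB b)}

/-- Quantum Gromov–Hausdorff distance. -/
noncomputable def distq (LA : Seminorm ℝ A.carrier) (LB : Seminorm ℝ B.carrier) : ℝ≥0∞ :=
  ⨅ L ∈ A.admissible B LA LB,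
    hausdorffDistWith ((A.prod B).rho L) (Set.range (A.leftState B)) (Set.range (A.rightState B))

end OrderUnitSpace

open Filter Topology

theorem Induces.le {α β : Type*} {π : α → β} {L : α → ℝ} {LB : β → ℝ} (hind : Induces π L LB)
    (hL : ∀ a, 0 ≤ L a) (a : α) : LB (π a) ≤ L a :=
  (hind _).trans_le (csInf_le ⟨0, by rintro _ ⟨a, -, rfl⟩; exact hL a⟩ ⟨a, rfl, rfl⟩)

theorem Induces.exists_lt {α β : Type*} {π : α → β} {L : α → ℝ} {LB : β → ℝ}
    (hind : Induces π L LB) (hπ : Function.Surjective π) {b : β} {r : ℝ} (h : LB b < r) :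
    ∃ a, π a = b ∧ L a < r := by
  obtain ⟨a, rfl⟩ := hπ b
  rw [hind, quotientSeminorm] at h
  obtain ⟨_, ⟨a', ha', rfl⟩, hlt⟩ :=
    exists_lt_of_csInf_lt (s := {r | ∃ a', π a' = π a ∧ L a' = r}) ⟨_, a, rfl, rfl⟩ h
  exact ⟨a', ha', hlt⟩

theorem exists_lt_of_hausdorffDistWith_lt {S : Type*} {ρ : S → S → ℝ≥0∞} {T U : Set S}
    {δ : ℝ≥0∞} (h : hausdorffDistWith ρ T U < δ) :
    (∀ t ∈ T, ∃ u ∈ U, ρ t u < δ) ∧ (∀ u ∈ U, ∃ t ∈ T, ρ t u < δ) := by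
  rw [hausdorffDistWith, max_lt_iff] at h
  exact ⟨fun t ht => lt_biInf_iff.1
      ((le_iSup₂ (f := fun t _ => ⨅ u ∈ U, ρ t u) t ht).trans_lt h.1),
    fun u hu => lt_biInf_iff.1
      ((le_iSup₂ (f := fun u _ => ⨅ t ∈ T, ρ t u) u hu).trans_lt h.2)⟩

theorem ENNReal.le_of_forall_le_add_of_tendsto {ι : Type*} {l : Filter ι} [l.NeBot]
    {a b : ℝ≥0∞} {ε : ι → ℝ≥0∞} (hε : Tendsto ε l (𝓝 0)) (h : ∀ i, a ≤ b + ε i) : a ≤ b :=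
  ge_of_tendsto' (by simpa using tendsto_const_nhds.add hε) h

namespace OrderUnitSpace

variable {A B : OrderUnitSpace}

namespace State

theorem ext {x y : A.State} (h : ∀ a, x.1 a = y.1 a) : x = y :=
  Subtype.ext (LinearMap.ext h)

theorem apply_mono (μ : A.State) {a b : A.carrier} (h : a ≤ b) : μ.1 a ≤ μ.1 b := by
  have hba : 0 ≤ b - a := by
    simpa [neg_add_eq_sub] using A.add_le_add_left' a b h (-a)
  simpa [map_sub, sub_nonneg] using μ.2.2 _ hba

theorem apply_smul_e (μ : A.State) (t : ℝ) : μ.1 (t • A.e) = t := by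
  rw [map_smul, μ.2.1, smul_eq_mul, mul_one]

theorem exists_abs_apply_le (a : A.carrier) : ∃ K : ℝ, ∀ μ : A.State, |μ.1 a| ≤ K := by
  obtain ⟨r, hr⟩ := A.orderUnit a
  obtain ⟨s, hs⟩ := A.orderUnit (-a)
  refine ⟨max r s, fun μ => abs_le.2 ⟨?_, ?_⟩⟩
  · have := μ.apply_mono hs
    rw [map_neg, apply_smul_e] at this
    linarith [le_max_right r s]
  · have := μ.apply_mono hr
    rw [apply_smul_e] at this
    linarith [le_max_left r s]

theorem isClosed_range_val :
    IsClosed (Set.range fun μ : A.State => (μ.1 : A.carrier → ℝ)) := by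
  have hrange : (Set.range fun μ : A.State => (μ.1 : A.carrier → ℝ)) =
      {f | f A.e = 1} ∩ (⋂ (a) (b), {f | f (a + b) = f a + f b}) ∩
        (⋂ (c : ℝ) (a), {f | f (c • a) = c * f a}) ∩ ⋂ (a) (_ : 0 ≤ a), {f | 0 ≤ f a} := by
    ext f
    simp only [Set.mem_range, Set.mem_inter_iff, Set.mem_iInter, Set.mem_ofPred_eq]
    constructor
    · rintro ⟨μ, rfl⟩
      exact ⟨⟨⟨μ.2.1, map_add μ.1⟩, map_smul μ.1⟩, μ.2.2⟩
    · rintro ⟨⟨⟨he, hadd⟩, hsmul⟩, hpos⟩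
      exact ⟨⟨⟨⟨f, hadd⟩, hsmul⟩, he, hpos⟩, rfl⟩
  rw [hrange]
  refine .inter (.inter (.inter ?_ ?_) ?_) ?_
  · exact isClosed_eq (continuous_apply _) continuous_const
  · exact isClosed_iInter fun a => isClosed_iInter fun b =>
      isClosed_eq (continuous_apply _) ((continuous_apply a).add (continuous_apply b))
  · exact isClosed_iInter fun c => isClosed_iInter fun a =>
      isClosed_eq (continuous_apply _) (continuous_const.mul (continuous_apply a))
  · exact isClosed_iInter fun a => isClosed_iInter fun _ =>
      isClosed_le continuous_const (continuous_apply a)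

instance : CompactSpace A.State := by
  choose K hK using exists_abs_apply_le (A := A)
  have hind : IsInducing fun μ : A.State => (μ.1 : A.carrier → ℝ) := ⟨rfl⟩
  refine ⟨hind.isCompact_iff.2 ?_⟩
  rw [Set.image_univ]
  refine (isCompact_univ_pi fun a => isCompact_Icc (a := -K a) (b := K a)).of_isClosed_subset
    isClosed_range_val ?_
  rintro _ ⟨μ, rfl⟩ a -
  exact abs_le.1 (hK a μ)

def convexComb (t : ℝ) (ht0 : 0 ≤ t) (ht1 : t ≤ 1) (x y : A.State) : A.State :=
  ⟨t • x.1 + (1 - t) • y.1, by simp [x.2.1, y.2.1], fun a ha => by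
    simpa using add_nonneg (mul_nonneg ht0 (x.2.2 a ha))
      (mul_nonneg (sub_nonneg.2 ht1) (y.2.2 a ha))⟩

end State

section Rho

variable {L : Seminorm ℝ A.carrier}

theorem ofReal_abs_sub_le_rho (x y : A.State) {a : A.carrier} (ha : L a ≤ 1) :
    ENNReal.ofReal |x.1 a - y.1 a| ≤ A.rho L x y :=
  le_iSup (fun a : {a // L a ≤ 1} => ENNReal.ofReal |x.1 a.1 - y.1 a.1|) ⟨a, ha⟩

theorem rho_comm (x y : A.State) : A.rho L x y = A.rho L y x := by
  simp only [rho, abs_sub_comm]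

theorem rho_self (x : A.State) : A.rho L x x = 0 := by
  simp [rho]

theorem rho_triangle (x y z : A.State) : A.rho L x z ≤ A.rho L x y + A.rho L y z := by
  refine iSup_le fun a => ?_
  calc ENNReal.ofReal |x.1 a - z.1 a|
      ≤ ENNReal.ofReal |x.1 a - y.1 a| + ENNReal.ofReal |y.1 a - z.1 a| := by
        rw [← ENNReal.ofReal_add (abs_nonneg _) (abs_nonneg _)]
        exact ENNReal.ofReal_le_ofReal (abs_sub_le _ _ _)
    _ ≤ A.rho L x y + A.rho L y z :=
        add_le_add (ofReal_abs_sub_le_rho x y a.2) (ofReal_abs_sub_le_rho y z a.2)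

theorem rho_triangle4 (x y z w : A.State) :
    A.rho L x w ≤ A.rho L x y + A.rho L y z + A.rho L z w :=
  (rho_triangle x z w).trans (add_le_add_left (rho_triangle x y z) _)

theorem IsLipschitz.eq_of_rho_eq_zero (hL : A.IsLipschitz L) {x y : A.State}
    (h : A.rho L x y = 0) : x = y := by
  refine State.ext fun a => ?_
  rcases (apply_nonneg L a).eq_or_lt with h0 | h0
  · obtain ⟨t, rfl⟩ := (hL a).1 h0.symm
    rw [x.apply_smul_e, y.apply_smul_e]
  · have hle := ofReal_abs_sub_le_rho (L := L) x y (a := (L a)⁻¹ • a)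
      (by rw [map_smul_eq_mul, Real.norm_of_nonneg (inv_nonneg.2 h0.le), inv_mul_cancel₀ h0.ne'])
    rw [h, nonpos_iff_eq_zero, ENNReal.ofReal_eq_zero, map_smul, map_smul, smul_eq_mul,
      smul_eq_mul, ← mul_sub, abs_mul, abs_of_pos (inv_pos.2 h0)] at hle
    have := abs_nonpos_iff.1 (nonpos_of_mul_nonpos_right hle (inv_pos.2 h0))
    linarith

theorem rho_convexComb_le {t : ℝ} (ht0 : 0 ≤ t) (ht1 : t ≤ 1) (x x' y y' : A.State) :
    A.rho L (State.convexComb t ht0 ht1 x x') (State.convexComb t ht0 ht1 y y') ≤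
      max (A.rho L x y) (A.rho L x' y') := by
  refine iSup_le fun a => ?_
  have hcomb : (State.convexComb t ht0 ht1 x x').1 a - (State.convexComb t ht0 ht1 y y').1 a =
      t * (x.1 a - y.1 a) + (1 - t) * (x'.1 a - y'.1 a) := by
    simp only [State.convexComb, LinearMap.add_apply, LinearMap.smul_apply, smul_eq_mul]
    ring
  calc ENNReal.ofReal
        |(State.convexComb t ht0 ht1 x x').1 a - (State.convexComb t ht0 ht1 y y').1 a|
      ≤ ENNReal.ofReal (max |x.1 a - y.1 a| |x'.1 a - y'.1 a|) := by
        refine ENNReal.ofReal_le_ofReal ?_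
        rw [hcomb]
        refine (abs_add_le _ _).trans ?_
        rw [abs_mul, abs_mul, abs_of_nonneg ht0, abs_of_nonneg (sub_nonneg.2 ht1)]
        exact Convex.combo_le_max _ _ ht0 (sub_nonneg.2 ht1) (add_sub_cancel _ _)
    _ ≤ max (A.rho L x y) (A.rho L x' y') := by
        rw [ENNReal.ofReal_max]
        exact max_le_max (ofReal_abs_sub_le_rho x y a.2) (ofReal_abs_sub_le_rho x' y' a.2)

theorem IsLipNorm.tendsto_rho (hL : A.IsLipNorm L) {ι : Type*} {l : Filter ι}
    {f : ι → A.State} {x : A.State} (hf : Tendsto f l (𝓝 x)) :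
    Tendsto (fun i => A.rho L x (f i)) l (𝓝 0) := by
  refine ENNReal.tendsto_nhds_zero.2 fun ε hε => ?_
  have hopen : IsOpen[ballTopology (A.rho L)] {y | A.rho L x y < ε} :=
    TopologicalSpace.GenerateOpen.basic _ ⟨x, ε, hε, rfl⟩
  rw [hL.2] at hopen
  filter_upwards [hf (hopen.mem_nhds (by simpa [rho_self] using hε))] with i hi
  exact hi.le

theorem IsLipNorm.exists_tendsto_rho_zero (hL : A.IsLipNorm L) {ι : Type*} (U : Ultrafilter ι)
    (f : ι → A.State) : ∃ x, Tendsto (fun i => A.rho L x (f i)) U (𝓝 0) :=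
  ⟨_, hL.tendsto_rho (Ultrafilter.le_nhds_lim (U.map f))⟩

end Rho

theorem rho_pullState {C : OrderUnitSpace} {L : Seminorm ℝ C.carrier}
    {LA : Seminorm ℝ A.carrier} {f : C.carrier →ₗ[ℝ] A.carrier} (hf : C.IsMorphism A f)
    (hfs : Function.Surjective f)
    (hind : Induces f (fun c => L c) (fun a => LA a)) (x y : A.State) :
    C.rho L (C.pullState A f hf x) (C.pullState A f hf y) = A.rho LA x y := by
  apply le_antisymm
  · exact iSup_le fun c => ofReal_abs_sub_le_rho x y
      ((hind.le (apply_nonneg L) c.1).trans c.2)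
  -- `r • a` has `LA`-seminorm `< 1`, so it lifts to the unit ball of `L`
  refine iSup_le fun a => ENNReal.le_of_forall_lt_one_mul_le fun r hr => ?_
  have hr' : r.toReal < 1 := ENNReal.toReal_lt_of_lt_ofReal (by simpa using hr)
  have hs : LA (r.toReal • a.1) < 1 := by
    rw [map_smul_eq_mul, Real.norm_of_nonneg ENNReal.toReal_nonneg]
    exact (mul_le_of_le_one_right ENNReal.toReal_nonneg a.2).trans_lt hr'
  obtain ⟨c, hc, hLc⟩ := hind.exists_lt hfs hs
  calc r * ENNReal.ofReal |x.1 a.1 - y.1 a.1|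
      = ENNReal.ofReal |(C.pullState A f hf x).1 c - (C.pullState A f hf y).1 c| := by
        simp only [pullState, LinearMap.comp_apply, hc, map_smul, smul_eq_mul, ← mul_sub,
          abs_mul, abs_of_nonneg ENNReal.toReal_nonneg]
        rw [ENNReal.ofReal_mul ENNReal.toReal_nonneg,
          ENNReal.ofReal_toReal (hr.trans ENNReal.one_lt_top).ne]
    _ ≤ C.rho L (C.pullState A f hf x) (C.pullState A f hf y) :=
        ofReal_abs_sub_le_rho _ _ hLc.le

theorem isMorphism_fst : (A.prod B).IsMorphism A (LinearMap.fst ℝ A.carrier B.carrier) :=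
  ⟨rfl, fun _ hp => hp.1⟩

theorem isMorphism_snd : (A.prod B).IsMorphism B (LinearMap.snd ℝ A.carrier B.carrier) :=
  ⟨rfl, fun _ hp => hp.2⟩

section Admissible

variable {LA : Seminorm ℝ A.carrier} {LB : Seminorm ℝ B.carrier}
  {L : Seminorm ℝ (A.prod B).carrier}

theorem rho_leftState (hL : L ∈ A.admissible B LA LB) (x y : A.State) :
    (A.prod B).rho L (A.leftState B x) (A.leftState B y) = A.rho LA x y :=
  rho_pullState isMorphism_fst Prod.fst_surjective hL.2.1 x y

theorem rho_rightState (hL : L ∈ A.admissible B LA LB) (x y : B.State) :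
    (A.prod B).rho L (A.rightState B x) (A.rightState B y) = B.rho LB x y :=
  rho_pullState isMorphism_snd Prod.snd_surjective hL.2.2 x y

theorem leftState_convexComb {t : ℝ} (ht0 : 0 ≤ t) (ht1 : t ≤ 1) (x y : A.State) :
    A.leftState B (State.convexComb t ht0 ht1 x y) =
      State.convexComb t ht0 ht1 (A.leftState B x) (A.leftState B y) :=
  State.ext fun _ => rfl

theorem rightState_convexComb {t : ℝ} (ht0 : 0 ≤ t) (ht1 : t ≤ 1) (x y : B.State) :
    A.rightState B (State.convexComb t ht0 ht1 x y) =
      State.convexComb t ht0 ht1 (A.rightState B x) (A.rightState B y) :=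
  State.ext fun _ => rfl

theorem rho_le_rho_add_of_mem_admissible (hL : L ∈ A.admissible B LA LB) (x x' : A.State)
    (y y' : B.State) :
    A.rho LA x x' ≤ (A.prod B).rho L (A.leftState B x) (A.rightState B y) + B.rho LB y y' +
      (A.prod B).rho L (A.leftState B x') (A.rightState B y') := by
  rw [← rho_leftState hL, ← rho_rightState hL, rho_comm (A.leftState B x')]
  exact rho_triangle4 _ _ _ _

theorem rho_le_rho_add_of_mem_admissible' (hL : L ∈ A.admissible B LA LB) (x x' : A.State)
    (y y' : B.State) :
    B.rho LB y y' ≤ (A.prod B).rho L (A.leftState B x) (A.rightState B y) + A.rho LA x x' +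
      (A.prod B).rho L (A.leftState B x') (A.rightState B y') := by
  rw [← rho_leftState hL, ← rho_rightState hL, rho_comm (A.leftState B x)]
  exact rho_triangle4 _ _ _ _

theorem exists_mem_admissible_rho_lt_of_distq_eq_zero (h : A.distq B LA LB = 0) {δ : ℝ≥0∞}
    (hδ : 0 < δ) : ∃ L ∈ A.admissible B LA LB,
      (∀ ν, ∃ μ, (A.prod B).rho L (A.leftState B μ) (A.rightState B ν) < δ) ∧
      (∀ μ, ∃ ν, (A.prod B).rho L (A.leftState B μ) (A.rightState B ν) < δ) := by
  obtain ⟨L, hL, hlt⟩ := lt_biInf_iff.1 (h.trans_lt hδ)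
  obtain ⟨hleft, hright⟩ := exists_lt_of_hausdorffDistWith_lt hlt
  refine ⟨L, hL, fun ν => ?_, fun μ => ?_⟩
  · obtain ⟨_, ⟨μ, rfl⟩, hμ⟩ := hright _ ⟨ν, rfl⟩
    exact ⟨μ, hμ⟩
  · obtain ⟨_, ⟨ν, rfl⟩, hν⟩ := hleft _ ⟨μ, rfl⟩
    exact ⟨ν, hν⟩

end Admissible

section Limit

variable {LA : Seminorm ℝ A.carrier} {LB : Seminorm ℝ B.carrier}
  {ι : Type*} {l : Filter ι} [l.NeBot] {δ : ι → ℝ≥0∞} {L : ι → Seminorm ℝ (A.prod B).carrier}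
  {w : ι → B.State → A.State} {α : B.State → A.State}

theorem rho_eq_of_tendsto (hδ : Tendsto δ l (𝓝 0)) (hL : ∀ i, L i ∈ A.admissible B LA LB)
    (hw : ∀ i ν, (A.prod B).rho (L i) (A.leftState B (w i ν)) (A.rightState B ν) ≤ δ i)
    (hα : ∀ ν, Tendsto (fun i => A.rho LA (α ν) (w i ν)) l (𝓝 0)) (ν ν' : B.State) :
    A.rho LA (α ν) (α ν') = B.rho LB ν ν' := by
  have hε : Tendsto (fun i => A.rho LA (α ν) (w i ν) + A.rho LA (α ν') (w i ν') + (δ i + δ i))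
      l (𝓝 0) := by
    simpa using ((hα ν).add (hα ν')).add (hδ.add hδ)
  apply le_antisymm <;> refine ENNReal.le_of_forall_le_add_of_tendsto hε fun i => ?_
  · calc A.rho LA (α ν) (α ν')
        ≤ A.rho LA (α ν) (w i ν) + A.rho LA (w i ν) (w i ν') + A.rho LA (w i ν') (α ν') :=
          rho_triangle4 _ _ _ _
      _ ≤ A.rho LA (α ν) (w i ν) + (δ i + B.rho LB ν ν' + δ i) + A.rho LA (α ν') (w i ν') := by
          rw [rho_comm (w i ν')]
          gcongr
          exact (rho_le_rho_add_of_mem_admissible (hL i) _ _ ν ν').trans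
            (by gcongr <;> exact hw i _)
      _ = B.rho LB ν ν' +
          (A.rho LA (α ν) (w i ν) + A.rho LA (α ν') (w i ν') + (δ i + δ i)) := by
          ring
  · calc B.rho LB ν ν'
        ≤ δ i + A.rho LA (w i ν) (w i ν') + δ i :=
          (rho_le_rho_add_of_mem_admissible' (hL i) _ _ ν ν').trans (by gcongr <;> exact hw i _)
      _ ≤ δ i + (A.rho LA (α ν) (w i ν) + A.rho LA (α ν) (α ν') + A.rho LA (α ν') (w i ν')) +
          δ i := by
          gcongr
          rw [rho_comm (α ν) (w i ν)]
          exact rho_triangle4 _ _ _ _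
      _ = A.rho LA (α ν) (α ν') +
          (A.rho LA (α ν) (w i ν) + A.rho LA (α ν') (w i ν') + (δ i + δ i)) := by
          ring

theorem leftInverse_of_tendsto (hLA : A.IsLipschitz LA) (hδ : Tendsto δ l (𝓝 0))
    (hL : ∀ i, L i ∈ A.admissible B LA LB)
    (hw : ∀ i ν, (A.prod B).rho (L i) (A.leftState B (w i ν)) (A.rightState B ν) ≤ δ i)
    (hα : ∀ ν, Tendsto (fun i => A.rho LA (α ν) (w i ν)) l (𝓝 0))
    {v : ι → A.State → B.State} {β : A.State → B.State}
    (hv : ∀ i μ, (A.prod B).rho (L i) (A.leftState B μ) (A.rightState B (v i μ)) ≤ δ i)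
    (hβ : ∀ μ, Tendsto (fun i => B.rho LB (β μ) (v i μ)) l (𝓝 0)) :
    Function.LeftInverse α β := by
  intro μ
  refine hLA.eq_of_rho_eq_zero (nonpos_iff_eq_zero.1 ?_)
  have hε : Tendsto (fun i => A.rho LA (α (β μ)) (w i (β μ)) + B.rho LB (β μ) (v i μ) +
      (δ i + δ i)) l (𝓝 0) := by
    simpa using ((hα (β μ)).add (hβ μ)).add (hδ.add hδ)
  refine ENNReal.le_of_forall_le_add_of_tendsto hε fun i => ?_
  calc A.rho LA (α (β μ)) μ
      ≤ A.rho LA (α (β μ)) (w i (β μ)) + A.rho LA (w i (β μ)) μ := rho_triangle _ _ _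
    _ ≤ A.rho LA (α (β μ)) (w i (β μ)) + (δ i + B.rho LB (β μ) (v i μ) + δ i) := by
        gcongr
        exact (rho_le_rho_add_of_mem_admissible (hL i) _ _ (β μ) (v i μ)).trans
          (by gcongr; exacts [hw i _, hv i _])
    _ = 0 + _ := by ring

theorem apply_convexComb_of_tendsto (hLA : A.IsLipschitz LA) (hδ : Tendsto δ l (𝓝 0))
    (hL : ∀ i, L i ∈ A.admissible B LA LB)
    (hw : ∀ i ν, (A.prod B).rho (L i) (A.leftState B (w i ν)) (A.rightState B ν) ≤ δ i)
    (hα : ∀ ν, Tendsto (fun i => A.rho LA (α ν) (w i ν)) l (𝓝 0))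
    {t : ℝ} (ht0 : 0 ≤ t) (ht1 : t ≤ 1) (μ ν : B.State) :
    α (State.convexComb t ht0 ht1 μ ν) = State.convexComb t ht0 ht1 (α μ) (α ν) := by
  set σ := State.convexComb t ht0 ht1 μ ν
  refine hLA.eq_of_rho_eq_zero (nonpos_iff_eq_zero.1 ?_)
  have hε : Tendsto (fun i => A.rho LA (α σ) (w i σ) + (δ i + δ i) +
      (A.rho LA (α μ) (w i μ) + A.rho LA (α ν) (w i ν))) l (𝓝 0) := by
    simpa using ((hα σ).add (hδ.add hδ)).add ((hα μ).add (hα ν))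
  refine ENNReal.le_of_forall_le_add_of_tendsto hε fun i => ?_
  have hcomb : (A.prod B).rho (L i)
      (A.leftState B (State.convexComb t ht0 ht1 (w i μ) (w i ν))) (A.rightState B σ) ≤ δ i := by
    rw [leftState_convexComb, rightState_convexComb]
    exact (rho_convexComb_le ht0 ht1 _ _ _ _).trans (max_le (hw i μ) (hw i ν))
  calc A.rho LA (α σ) (State.convexComb t ht0 ht1 (α μ) (α ν))
      ≤ A.rho LA (α σ) (w i σ) +
          A.rho LA (w i σ) (State.convexComb t ht0 ht1 (w i μ) (w i ν)) +
          A.rho LA (State.convexComb t ht0 ht1 (w i μ) (w i ν))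
            (State.convexComb t ht0 ht1 (α μ) (α ν)) := rho_triangle4 _ _ _ _
    _ ≤ A.rho LA (α σ) (w i σ) + (δ i + 0 + δ i) +
          (A.rho LA (α μ) (w i μ) + A.rho LA (α ν) (w i ν)) := by
        gcongr
        · calc _ ≤ _ := rho_le_rho_add_of_mem_admissible (hL i) _ _ σ σ
            _ ≤ δ i + 0 + δ i := by rw [rho_self]; gcongr; exact hw i σ
        · refine (rho_convexComb_le ht0 ht1 _ _ _ _).trans (max_le ?_ ?_) <;>
            rw [rho_comm] <;> simp
    _ = 0 + _ := by ring

end Limit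

end OrderUnitSpace

open OrderUnitSpace

/-- **Distance zero gives an isometry (Theorem 7.8 of Rieffel).** If `(A, L_A)` and
`(B, L_B)` are compact quantum metric spaces with `dist_q(A, B) = 0`, then there is
an isometry between them: an affine bijection `α` from `S(B)` onto `S(A)` which is
isometric for the metrics `ρ_{L_B}` and `ρ_{L_A}`. -/
theorem distq_eq_zero_isometry (A B : OrderUnitSpace)
    (LA : Seminorm ℝ A.carrier) (LB : Seminorm ℝ B.carrier)
    (hLA : A.IsLipNorm LA) (hLB : B.IsLipNorm LB)
    (h : A.distq B LA LB = 0) :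
    ∃ α : B.State → A.State, Function.Bijective α ∧
      (∀ μ ν : B.State, A.rho LA (α μ) (α ν) = B.rho LB μ ν) ∧
      (∀ (t : ℝ), 0 ≤ t → t ≤ 1 → ∀ μ ν σ : B.State,
        (σ.1 : B.carrier →ₗ[ℝ] ℝ) = t • μ.1 + (1 - t) • ν.1 →
        ((α σ).1 : A.carrier →ₗ[ℝ] ℝ) = t • (α μ).1 + (1 - t) • (α ν).1) := by
  choose L hL hclose using fun n : ℕ => exists_mem_admissible_rho_lt_of_distq_eq_zero h
    (ENNReal.inv_pos.2 (ENNReal.natCast_ne_top n))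
  choose w hw using fun n => (hclose n).1
  choose v hv using fun n => (hclose n).2
  let U := Ultrafilter.of (atTop : Filter ℕ)
  have hδ : Tendsto (fun n : ℕ => (n : ℝ≥0∞)⁻¹) U (𝓝 0) :=
    ENNReal.tendsto_inv_nat_nhds_zero.mono_left (Ultrafilter.of_le _)
  choose α hα using fun ν => hLA.exists_tendsto_rho_zero U fun n => w n ν
  choose β hβ using fun μ => hLB.exists_tendsto_rho_zero U fun n => v n μ
  have hw' := fun n ν => (hw n ν).le
  have hiso := rho_eq_of_tendsto hδ hL hw' hα
  have hinv := leftInverse_of_tendsto hLA.1 hδ hL hw' hα (fun n μ => (hv n μ).le) hβ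
  refine ⟨α, ⟨fun ν ν' hνν' => hLB.1.eq_of_rho_eq_zero ?_, hinv.surjective⟩, hiso, ?_⟩
  · rw [← hiso, hνν', rho_self]
  · intro t ht0 ht1 μ ν σ hσ
    obtain rfl : σ = State.convexComb t ht0 ht1 μ ν := Subtype.ext hσ
    exact congrArg Subtype.val (apply_convexComb_of_tendsto hLA.1 hδ hL hw' hα ht0 ht1 μ ν)
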